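/- arXiv:2503.06570 — 6 statements merged into one kernel-verified Lean document; each statement's English description precedes it below -/
import Mathlib

section
/- Let f : [0, ∞) → ℂ be continuous and let α, β ∈ ℂ with Re α > 0 and Re β > 0. Then for every t ≥ 0, the iterated Riemann–Liouville integral satisfies I_α⟨I_β⟨f⟩⟩(t) = I_{α+β}⟨f⟩(t). -/
/-- Complex power of a real number via the real logarithm:
`s ^ w := exp (w * log s)`. -/
noncomputable def cpowR (s : ℝ) (w : ℂ) : ℂ := Complex.exp (w * Real.log s)

/-- The Riemann–Liouville integral `I_α⟨f⟩(t) = ∫_0^t f x * (t-x)^(α-1)/Γ(α) dx`. -/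
noncomputable def RL (α : ℂ) (f : ℝ → ℂ) (t : ℝ) : ℂ :=
  ∫ x in (0:ℝ)..t, f x * cpowR (t - x) (α - 1) / Complex.Gamma α

/-!
Both sides are integrals over the triangle `0 < y ≤ x ≤ t`. Integrating first in `x` (Fubini),
the substitution `x = y + u` turns `∫_y^t (x - y)^(β-1) (t - x)^(α-1) dx` into
`(t - y)^(α+β-1) B(β, α)`, and `Γ(α) Γ(β) = Γ(α + β) B(β, α)` finishes. Fubini applies because
`f` is bounded on `[0, t]`: each `x`-section of the integrand then has norm integral at most
`M ∫_0^t |u^(β-1)| du · |(t - x)^(α-1)|`, which is integrable in `x`.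
-/

open MeasureTheory Set Complex

lemma cpowR_eq_ofReal_cpow {s : ℝ} (hs : 0 < s) (w : ℂ) : cpowR s w = (s : ℂ) ^ w := by
  rw [cpowR, cpow_def_of_ne_zero (ofReal_ne_zero.mpr hs.ne'), ← ofReal_log hs.le, mul_comm]

lemma RL_eq_setIntegral_div_Gamma (α : ℂ) (f : ℝ → ℂ) {t : ℝ} (ht : 0 ≤ t) :
    RL α f t = (∫ x in Ioc 0 t, f x * ((t - x : ℝ) : ℂ) ^ (α - 1)) / Gamma α := by
  rw [RL, intervalIntegral.integral_of_le ht, ← integral_div,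
    setIntegral_congr_set Ioo_ae_eq_Ioc.symm, setIntegral_congr_set Ioo_ae_eq_Ioc.symm]
  refine setIntegral_congr_fun measurableSet_Ioo fun x hx => ?_
  rw [cpowR_eq_ofReal_cpow (sub_pos.mpr hx.2)]

section IocTruncation

variable {E : Type*} [NormedAddCommGroup E] {x t : ℝ}

lemma ite_le_eq_indicator_Iic (φ : ℝ → E) :
    (fun y => if y ≤ x then φ y else 0) = (Iic x).indicator φ := by
  ext y; simp [indicator_apply]

lemma integrableOn_Ioc_ite_le_iff {φ : ℝ → E} (hxt : x ≤ t) :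
    IntegrableOn (fun y => if y ≤ x then φ y else 0) (Ioc 0 t) ↔ IntegrableOn φ (Ioc 0 x) := by
  rw [ite_le_eq_indicator_Iic, IntegrableOn, integrable_indicator_iff measurableSet_Iic,
    IntegrableOn, Measure.restrict_restrict measurableSet_Iic, inter_comm, Ioc_inter_Iic,
    inf_eq_right.mpr hxt]
  rfl

lemma setIntegral_Ioc_ite_le [NormedSpace ℝ E] (φ : ℝ → E) (hxt : x ≤ t) :
    ∫ y in Ioc 0 t, (if y ≤ x then φ y else 0) = ∫ y in Ioc 0 x, φ y := by
  rw [ite_le_eq_indicator_Iic, setIntegral_indicator measurableSet_Iic, Ioc_inter_Iic,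
    inf_eq_right.mpr hxt]

end IocTruncation

lemma integral_Ioc_integral_Ioc_swap {E : Type*} [NormedAddCommGroup E] [NormedSpace ℝ E]
    {t : ℝ} {F : ℝ → ℝ → E}
    (hF : Integrable (Function.uncurry fun x y => if y ≤ x then F x y else 0)
      ((volume.restrict (Ioc 0 t)).prod (volume.restrict (Ioc 0 t)))) :
    ∫ x in Ioc 0 t, ∫ y in Ioc 0 x, F x y = ∫ y in Ioc 0 t, ∫ x in Icc y t, F x y := by
  have inner_y : ∀ y ∈ Ioc 0 t,
      ∫ x in Ioc 0 t, (if y ≤ x then F x y else 0) = ∫ x in Icc y t, F x y := by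
    intro y hy
    have : (fun x => if y ≤ x then F x y else 0) = (Ici y).indicator (F · y) := by
      ext x; simp [indicator_apply]
    have hset : Ioc 0 t ∩ Ici y = Icc y t := by
      ext x; simp only [mem_inter_iff, mem_Ioc, mem_Ici, mem_Icc]
      exact ⟨fun h => ⟨h.2, h.1.2⟩, fun h => ⟨⟨hy.1.trans_le h.1, h.2⟩, h.1⟩⟩
    rw [this, setIntegral_indicator measurableSet_Ici, hset]
  calc ∫ x in Ioc 0 t, ∫ y in Ioc 0 x, F x y
      = ∫ x in Ioc 0 t, ∫ y in Ioc 0 t, if y ≤ x then F x y else 0 :=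
        setIntegral_congr_fun measurableSet_Ioc fun x hx => (setIntegral_Ioc_ite_le _ hx.2).symm
    _ = ∫ y in Ioc 0 t, ∫ x in Ioc 0 t, if y ≤ x then F x y else 0 := integral_integral_swap hF
    _ = ∫ y in Ioc 0 t, ∫ x in Icc y t, F x y := setIntegral_congr_fun measurableSet_Ioc inner_y

lemma integrableOn_ofReal_sub_cpow {w : ℂ} (hw : -1 < w.re) (c : ℝ) :
    IntegrableOn (fun y : ℝ => ((c - y : ℝ) : ℂ) ^ w) (Ioc 0 c) := by
  have h := ((intervalIntegral.intervalIntegrable_cpow' hw (a := 0) (b := c)).comp_sub_left c).symm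
  rw [sub_zero, sub_self] at h
  exact h.def'.mono_set Ioc_subset_uIoc

lemma integral_ofReal_sub_cpow_mul_ofReal_sub_cpow (α β : ℂ) {y t : ℝ} (hyt : y < t) :
    ∫ x in y..t, ((x - y : ℝ) : ℂ) ^ (β - 1) * ((t - x : ℝ) : ℂ) ^ (α - 1) =
      ((t - y : ℝ) : ℂ) ^ (α + β - 1) * betaIntegral β α := by
  have shift := intervalIntegral.integral_comp_add_right (a := 0) (b := t - y)
    (fun x : ℝ => ((x - y : ℝ) : ℂ) ^ (β - 1) * ((t - x : ℝ) : ℂ) ^ (α - 1)) y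
  rw [zero_add, sub_add_cancel] at shift
  rw [← shift, add_comm α, ← betaIntegral_scaled β α (sub_pos.mpr hyt)]
  congr 1; ext u; push_cast; ring_nf

lemma integral_norm_ofReal_sub_cpow_le {w : ℂ} (hw : -1 < w.re) {x t : ℝ} (hx : 0 ≤ x)
    (hxt : x ≤ t) :
    ∫ y in Ioc 0 x, ‖((x - y : ℝ) : ℂ) ^ w‖ ≤ ∫ u in Ioc 0 t, ‖(u : ℂ) ^ w‖ := by
  have reflect : ∫ y in Ioc 0 x, ‖((x - y : ℝ) : ℂ) ^ w‖ = ∫ u in Ioc 0 x, ‖(u : ℂ) ^ w‖ := by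
    rw [← intervalIntegral.integral_of_le hx, ← intervalIntegral.integral_of_le hx,
      intervalIntegral.integral_comp_sub_left (fun u : ℝ => ‖(u : ℂ) ^ w‖), sub_self, sub_zero]
  rw [reflect]
  refine setIntegral_mono_set ?_ (ae_of_all _ fun u => norm_nonneg _)
    (Ioc_subset_Ioc_right hxt).eventuallyLE
  exact ((intervalIntegral.intervalIntegrable_cpow' hw).def'.mono_set Ioc_subset_uIoc).norm

lemma integral_norm_mul_ofReal_sub_cpow_le {f : ℝ → ℂ} {w : ℂ} (hw : -1 < w.re) {x t M : ℝ}
    (hM : ∀ y ∈ Ioc 0 t, ‖f y‖ ≤ M) (hx : x ∈ Ioc 0 t) :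
    ∫ y in Ioc 0 x, ‖f y * ((x - y : ℝ) : ℂ) ^ w‖ ≤ M * ∫ u in Ioc 0 t, ‖(u : ℂ) ^ w‖ := by
  have hM0 : 0 ≤ M := (norm_nonneg _).trans (hM x hx)
  calc ∫ y in Ioc 0 x, ‖f y * ((x - y : ℝ) : ℂ) ^ w‖
      ≤ ∫ y in Ioc 0 x, M * ‖((x - y : ℝ) : ℂ) ^ w‖ := by
        refine integral_mono_of_nonneg (ae_of_all _ fun y => norm_nonneg _)
          ((integrableOn_ofReal_sub_cpow hw x).norm.const_mul M) ?_
        filter_upwards [ae_restrict_mem measurableSet_Ioc] with y hy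
        rw [norm_mul]
        exact mul_le_mul_of_nonneg_right (hM y (Ioc_subset_Ioc_right hx.2 hy)) (norm_nonneg _)
    _ ≤ M * ∫ u in Ioc 0 t, ‖(u : ℂ) ^ w‖ := by
        rw [integral_const_mul]
        exact mul_le_mul_of_nonneg_left (integral_norm_ofReal_sub_cpow_le hw hx.1.le hx.2) hM0

lemma integrable_iteratedRL_integrand {f : ℝ → ℂ} {t M : ℝ}
    (hfm : AEStronglyMeasurable f (volume.restrict (Ioc 0 t))) (hM : ∀ y ∈ Ioc 0 t, ‖f y‖ ≤ M)
    {α β : ℂ} (hα : 0 < α.re) (hβ : 0 < β.re) :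
    Integrable (Function.uncurry fun x y =>
        if y ≤ x then f y * ((x - y : ℝ) : ℂ) ^ (β - 1) * ((t - x : ℝ) : ℂ) ^ (α - 1) else 0)
      ((volume.restrict (Ioc 0 t)).prod (volume.restrict (Ioc 0 t))) := by
  set μ := volume.restrict (Ioc (0 : ℝ) t)
  set g : ℝ × ℝ → ℂ := fun p =>
    f p.2 * ((p.1 - p.2 : ℝ) : ℂ) ^ (β - 1) * ((t - p.1 : ℝ) : ℂ) ^ (α - 1)
  have hβ1 : -1 < (β - 1).re := by simp [hβ]
  have hα1 : -1 < (α - 1).re := by simp [hα]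
  have h_eq : (Function.uncurry fun x y => if y ≤ x then g (x, y) else 0) =
      {p : ℝ × ℝ | p.2 ≤ p.1}.indicator g := by
    ext ⟨x, y⟩; simp [indicator_apply]
  change Integrable (Function.uncurry fun x y => if y ≤ x then g (x, y) else 0) (μ.prod μ)
  have hgm : AEStronglyMeasurable g (μ.prod μ) :=
    (hfm.comp_snd.mul (Measurable.aestronglyMeasurable (by fun_prop))).mul
      (Measurable.aestronglyMeasurable (by fun_prop))
  have hm := h_eq ▸ hgm.indicator (measurableSet_le measurable_snd measurable_fst)
  rw [integrable_prod_iff hm]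
  refine ⟨?_, ?_⟩
  · filter_upwards [ae_restrict_mem measurableSet_Ioc] with x hx
    refine (integrableOn_Ioc_ite_le_iff (φ := fun y => g (x, y)) hx.2).mpr ?_
    have hf_bound : ∀ᵐ y ∂volume.restrict (Ioc 0 x), ‖f y‖ ≤ M := by
      filter_upwards [ae_restrict_mem measurableSet_Ioc] with y hy
      exact hM y (Ioc_subset_Ioc_right hx.2 hy)
    exact ((integrableOn_ofReal_sub_cpow hβ1 x).bdd_mul
      (hfm.mono_measure (Measure.restrict_mono (Ioc_subset_Ioc_right hx.2) le_rfl))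
      hf_bound).mul_const (((t - x : ℝ) : ℂ) ^ (α - 1))
  · set C := M * ∫ u in Ioc 0 t, ‖(u : ℂ) ^ (β - 1)‖
    refine Integrable.mono' ((integrableOn_ofReal_sub_cpow hα1 t).norm.const_mul C)
      hm.norm.integral_prod_right' ?_
    filter_upwards [ae_restrict_mem measurableSet_Ioc] with x hx
    rw [Real.norm_of_nonneg (integral_nonneg fun _ => norm_nonneg _)]
    simp only [Function.uncurry_apply_pair, apply_ite norm, norm_zero]
    rw [setIntegral_Ioc_ite_le _ hx.2]
    calc ∫ y in Ioc 0 x, ‖g (x, y)‖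
        = (∫ y in Ioc 0 x, ‖f y * ((x - y : ℝ) : ℂ) ^ (β - 1)‖) *
            ‖((t - x : ℝ) : ℂ) ^ (α - 1)‖ := by
          simp only [g, norm_mul (_ * _)]; exact integral_mul_const _ _
      _ ≤ C * ‖((t - x : ℝ) : ℂ) ^ (α - 1)‖ := by
          gcongr
          exact integral_norm_mul_ofReal_sub_cpow_le hβ1 hM hx

theorem setIntegral_iteratedRL_eq_betaIntegral_mul {f : ℝ → ℂ} {t M : ℝ}
    (hfm : AEStronglyMeasurable f (volume.restrict (Ioc 0 t))) (hM : ∀ y ∈ Ioc 0 t, ‖f y‖ ≤ M)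
    {α β : ℂ} (hα : 0 < α.re) (hβ : 0 < β.re) :
    ∫ x in Ioc 0 t,
        (∫ y in Ioc 0 x, f y * ((x - y : ℝ) : ℂ) ^ (β - 1)) * ((t - x : ℝ) : ℂ) ^ (α - 1)
      = betaIntegral β α * ∫ y in Ioc 0 t, f y * ((t - y : ℝ) : ℂ) ^ (α + β - 1) := by
  calc _ = ∫ x in Ioc 0 t, ∫ y in Ioc 0 x,
          f y * ((x - y : ℝ) : ℂ) ^ (β - 1) * ((t - x : ℝ) : ℂ) ^ (α - 1) := by
        simp_rw [integral_mul_const]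
    _ = ∫ y in Ioc 0 t, ∫ x in Icc y t,
          f y * ((x - y : ℝ) : ℂ) ^ (β - 1) * ((t - x : ℝ) : ℂ) ^ (α - 1) :=
        integral_Ioc_integral_Ioc_swap (integrable_iteratedRL_integrand hfm hM hα hβ)
    _ = ∫ y in Ioc 0 t, betaIntegral β α * (f y * ((t - y : ℝ) : ℂ) ^ (α + β - 1)) := by
        rw [setIntegral_congr_set Ioo_ae_eq_Ioc.symm, setIntegral_congr_set Ioo_ae_eq_Ioc.symm]
        refine setIntegral_congr_fun measurableSet_Ioo fun y hy => ?_
        simp_rw [integral_Icc_eq_integral_Ioc, ← intervalIntegral.integral_of_le hy.2.le,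
          mul_assoc, intervalIntegral.integral_const_mul,
          integral_ofReal_sub_cpow_mul_ofReal_sub_cpow α β hy.2]
        ring
    _ = _ := integral_const_mul _ _

theorem stmt0 (f : ℝ → ℂ) (hf : ContinuousOn f (Set.Ici 0))
    (α β : ℂ) (hα : 0 < α.re) (hβ : 0 < β.re) :
    ∀ t : ℝ, 0 ≤ t → RL α (RL β f) t = RL (α + β) f t := by
  intro t ht
  have hf_Icc : ContinuousOn f (Icc 0 t) := hf.mono Icc_subset_Ici_self
  obtain ⟨M, hM⟩ := isCompact_Icc.exists_bound_of_continuousOn hf_Icc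
  have hfm : AEStronglyMeasurable f (volume.restrict (Ioc 0 t)) :=
    (hf_Icc.mono Ioc_subset_Icc_self).aestronglyMeasurable measurableSet_Ioc
  have inner_RL : ∫ x in Ioc 0 t, RL β f x * ((t - x : ℝ) : ℂ) ^ (α - 1) =
      (∫ x in Ioc 0 t, (∫ y in Ioc 0 x, f y * ((x - y : ℝ) : ℂ) ^ (β - 1)) *
        ((t - x : ℝ) : ℂ) ^ (α - 1)) / Gamma β := by
    rw [← integral_div]
    refine setIntegral_congr_fun measurableSet_Ioc fun x hx => ?_
    rw [RL_eq_setIntegral_div_Gamma β f hx.1.le, div_mul_eq_mul_div]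
  have hΓ : Gamma β * Gamma α = Gamma (α + β) * betaIntegral β α := by
    rw [add_comm]; exact Gamma_mul_Gamma_eq_betaIntegral hβ hα
  have hαβ : 0 < (α + β).re := by rw [add_re]; positivity
  rw [RL_eq_setIntegral_div_Gamma _ _ ht, RL_eq_setIntegral_div_Gamma _ _ ht, inner_RL,
    setIntegral_iteratedRL_eq_betaIntegral_mul hfm (fun y hy => hM y (Ioc_subset_Icc_self hy))
      hα hβ,
    div_div, div_eq_div_iff (mul_ne_zero (Gamma_ne_zero_of_re_pos hβ) (Gamma_ne_zero_of_re_pos hα))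
      (Gamma_ne_zero_of_re_pos hαβ), hΓ]
  ring
end

section
/- Let α, λ ∈ ℂ with Re α > 0 and Re λ > 0, and let L ∈ ℕ with L > Re α − 1. Then, as t → +∞ (t real), I_α⟨x ↦ e^(λx)⟩(t) = λ^(−α)·e^(λt) − ∑_{ℓ=1}^{L} (1/Γ(α − ℓ + 1))·λ^(−ℓ)·t^(α−ℓ) + o(t^(Re α − L)), where λ^(−α) := exp(−α·Log λ) with the principal branch of the complex logarithm, t^(α−ℓ) := exp((α−ℓ)·log t), and 1/Γ(z) is interpreted as 0 at the poles of Γ. -/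
open MeasureTheory Filter Set Asymptotics Topology
open scoped Complex

namespace RiemannLiouville

lemma cpowR_eq_cpow {s : ℝ} (hs : 0 < s) (w : ℂ) : cpowR s w = (s : ℂ) ^ w := by
  rw [cpowR, Complex.cpow_def_of_ne_zero (by exact_mod_cast hs.ne'), ← Complex.ofReal_log hs.le,
    mul_comm]

noncomputable def laplaceTail (β lam : ℂ) (t : ℝ) : ℂ :=
  ∫ u in Ioi t, (u : ℂ) ^ β * cexp (-(lam * u))

lemma norm_cpow_mul_cexp_neg {u : ℝ} (hu : 0 < u) (β lam : ℂ) :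
    ‖(u : ℂ) ^ β * cexp (-(lam * u))‖ = u ^ β.re * Real.exp (-(lam.re * u)) := by
  rw [norm_mul, Complex.norm_cpow_eq_rpow_re_of_pos hu, Complex.norm_exp]
  simp

lemma continuousOn_cpow_mul_cexp_neg (β lam : ℂ) :
    ContinuousOn (fun u : ℝ => (u : ℂ) ^ β * cexp (-(lam * u))) (Ioi 0) :=
  fun u hu => ((Complex.continuousAt_ofReal_cpow_const u β (Or.inr (ne_of_gt hu))).mul
    (by fun_prop)).continuousWithinAt

lemma tendsto_cpow_mul_cexp_neg_atTop (β : ℂ) {lam : ℂ} (hlam : 0 < lam.re) :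
    Tendsto (fun u : ℝ => (u : ℂ) ^ β * cexp (-(lam * u))) atTop (𝓝 0) := by
  refine squeeze_zero_norm' ?_ (tendsto_rpow_mul_exp_neg_mul_atTop_nhds_zero β.re lam.re hlam)
  filter_upwards [eventually_gt_atTop 0] with u hu
  rw [norm_cpow_mul_cexp_neg hu, neg_mul]

lemma integrableOn_rpow_mul_exp_neg_Ioi (c : ℝ) {r : ℝ} (hr : 0 < r) {t : ℝ} (ht : 0 < t) :
    IntegrableOn (fun u : ℝ => u ^ c * Real.exp (-(r * u))) (Ioi t) := by
  refine integrable_of_isBigO_exp_neg (half_pos hr) ?_ ?_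
  · exact fun u hu => ((Real.continuousAt_rpow_const u c
      (Or.inl (ht.trans_le hu).ne')).mul (by fun_prop)).continuousWithinAt
  · have hdecay : (fun u : ℝ => u ^ c * Real.exp (-(r / 2) * u)) =O[atTop] (fun _ => (1 : ℝ)) :=
      (tendsto_rpow_mul_exp_neg_mul_atTop_nhds_zero c _ (half_pos hr)).isBigO_one ℝ
    refine (hdecay.mul (isBigO_refl (fun u : ℝ => Real.exp (-(r / 2) * u)) atTop)).congr
      (fun u => ?_) (fun u => one_mul _)
    rw [mul_assoc, ← Real.exp_add]
    ring_nf

lemma integrableOn_cpow_mul_cexp_neg_Ioi (β : ℂ) {lam : ℂ} (hlam : 0 < lam.re) {t : ℝ}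
    (ht : 0 < t) : IntegrableOn (fun u : ℝ => (u : ℂ) ^ β * cexp (-(lam * u))) (Ioi t) := by
  refine (integrableOn_rpow_mul_exp_neg_Ioi β.re hlam ht).mono' ?_ ?_
  · exact ((continuousOn_cpow_mul_cexp_neg β lam).mono
      (Ioi_subset_Ioi ht.le)).aestronglyMeasurable measurableSet_Ioi
  · filter_upwards [ae_restrict_mem measurableSet_Ioi] with u hu
    exact (norm_cpow_mul_cexp_neg (ht.trans hu) β lam).le

lemma integrableOn_rpow_mul_exp_neg_Ioi_zero {c : ℝ} (hc : -1 < c) {r : ℝ} (hr : 0 < r) :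
    IntegrableOn (fun u : ℝ => u ^ c * Real.exp (-(r * u))) (Ioi 0) := by
  simpa [Real.rpow_one] using integrableOn_rpow_mul_exp_neg_mul_rpow hc one_pos hr

lemma integrableOn_cpow_mul_cexp_neg_Ioi_zero {β : ℂ} (hβ : -1 < β.re) {lam : ℂ}
    (hlam : 0 < lam.re) :
    IntegrableOn (fun u : ℝ => (u : ℂ) ^ β * cexp (-(lam * u))) (Ioi 0) := by
  refine (integrableOn_rpow_mul_exp_neg_Ioi_zero hβ hlam).mono' ?_ ?_
  · exact (continuousOn_cpow_mul_cexp_neg β lam).aestronglyMeasurable measurableSet_Ioi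
  · filter_upwards [ae_restrict_mem measurableSet_Ioi] with u hu
    exact (norm_cpow_mul_cexp_neg hu β lam).le

lemma hasDerivAt_cpow_const_of_pos {u : ℝ} (hu : 0 < u) (β : ℂ) :
    HasDerivAt (fun s : ℝ => (s : ℂ) ^ β) (β * (u : ℂ) ^ (β - 1)) u :=
  (Complex.hasStrictDerivAt_cpow_const (Complex.ofReal_mem_slitPlane.2 hu)).hasDerivAt.comp_ofReal

lemma hasDerivAt_cexp_neg_mul (lam : ℂ) (u : ℝ) :
    HasDerivAt (fun s : ℝ => cexp (-(lam * s))) (-lam * cexp (-(lam * u))) u := by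
  have h : HasDerivAt (fun s : ℝ => -(lam * s)) (-lam) u := by
    simpa using ((hasDerivAt_id (u : ℂ)).const_mul lam).neg.comp_ofReal
  simpa [mul_comm] using h.cexp

lemma laplaceTail_eq_add {lam : ℂ} (hlam : 0 < lam.re) (β : ℂ) {t : ℝ} (ht : 0 < t) :
    laplaceTail β lam t =
      (t : ℂ) ^ β * cexp (-(lam * t)) / lam + β / lam * laplaceTail (β - 1) lam t := by
  have hlam0 : lam ≠ 0 := fun h => by simp [h] at hlam
  have hderiv : ∀ u ∈ Ici t, HasDerivAt (fun s : ℝ => -((s : ℂ) ^ β * cexp (-(lam * s))) / lam)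
      ((u : ℂ) ^ β * cexp (-(lam * u)) - β / lam * ((u : ℂ) ^ (β - 1) * cexp (-(lam * u)))) u := by
    intro u hu
    refine (((hasDerivAt_cpow_const_of_pos (ht.trans_le hu) β).mul
      (hasDerivAt_cexp_neg_mul lam u)).neg.div_const lam).congr_deriv ?_
    field_simp
    ring
  have hint := integrableOn_cpow_mul_cexp_neg_Ioi β hlam ht
  have hint' := (integrableOn_cpow_mul_cexp_neg_Ioi (β - 1) hlam ht).const_mul (β / lam)
  have hlim : Tendsto (fun s : ℝ => -((s : ℂ) ^ β * cexp (-(lam * s))) / lam) atTop (𝓝 0) := by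
    simpa using ((tendsto_cpow_mul_cexp_neg_atTop β hlam).neg.div_const lam)
  have hFTC := integral_Ioi_of_hasDerivAt_of_tendsto' hderiv (hint.sub hint') hlim
  rw [integral_sub hint hint', integral_const_mul] at hFTC
  unfold laplaceTail
  linear_combination hFTC

lemma inv_Gamma_mul_laplaceTail_eq {lam : ℂ} (hlam : 0 < lam.re) (α : ℂ) {t : ℝ} (ht : 0 < t)
    (n : ℕ) :
    (Complex.Gamma α)⁻¹ * laplaceTail (α - 1) lam t =
      cexp (-(lam * t)) * ∑ l ∈ Finset.Icc 1 n,
          (Complex.Gamma (α - l + 1))⁻¹ * (lam ^ l)⁻¹ * (t : ℂ) ^ (α - l) +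
        (Complex.Gamma (α - n))⁻¹ * (lam ^ n)⁻¹ * laplaceTail (α - 1 - n) lam t := by
  have hlam0 : lam ≠ 0 := fun h => by simp [h] at hlam
  induction n with
  | zero => simp
  | succ n ih =>
    have hGamma := Complex.one_div_Gamma_eq_self_mul_one_div_Gamma_add_one (α - (n + 1))
    rw [show α - (n + 1) + 1 = α - n by ring] at hGamma
    rw [ih, laplaceTail_eq_add hlam _ ht, Finset.sum_Icc_succ_top (Nat.le_add_left 1 n)]
    push_cast
    rw [show α - 1 - n = α - (n + 1) by ring, show α - (n + 1) - 1 = α - 1 - (n + 1) by ring,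
      show α - (n + 1) + 1 = α - n by ring, hGamma]
    field_simp
    ring

lemma differentiableAt_laplaceTail_zero {β : ℂ} (hβ : -1 < β.re) {z₀ : ℂ} (hz₀ : 0 < z₀.re) :
    DifferentiableAt ℂ (fun z => laplaceTail β z 0) z₀ := by
  set r := z₀.re / 2 with hr_def
  have hr : 0 < r := half_pos hz₀
  have hre_ge : ∀ z ∈ Metric.ball z₀ r, r ≤ z.re := fun z hz => by
    have := (Complex.abs_re_le_norm (z - z₀)).trans_lt (mem_ball_iff_norm.1 hz)
    rw [Complex.sub_re, abs_lt] at this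
    linarith [this.1]
  have hmeas : ∀ z : ℂ, AEStronglyMeasurable (fun u : ℝ => (u : ℂ) ^ β * cexp (-(z * u)))
      (volume.restrict (Ioi 0)) :=
    fun z => (continuousOn_cpow_mul_cexp_neg β z).aestronglyMeasurable measurableSet_Ioi
  have hmeas' : AEStronglyMeasurable (fun u : ℝ => (u : ℂ) ^ β * (cexp (-(z₀ * u)) * -(u : ℂ)))
      (volume.restrict (Ioi 0)) :=
    ContinuousOn.aestronglyMeasurable (fun u (hu : 0 < u) =>
      ((Complex.continuousAt_ofReal_cpow_const u β (Or.inr hu.ne')).mul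
        (by fun_prop)).continuousWithinAt) measurableSet_Ioi
  have hbound : ∀ᵐ (u : ℝ) ∂(volume.restrict (Ioi 0)), ∀ z ∈ Metric.ball z₀ r,
      ‖(u : ℂ) ^ β * (cexp (-(z * u)) * -(u : ℂ))‖ ≤ u ^ (β.re + 1) * Real.exp (-(r * u)) := by
    filter_upwards [ae_restrict_mem measurableSet_Ioi] with u (hu : 0 < u) z hz
    rw [← mul_assoc, norm_mul, norm_cpow_mul_cexp_neg hu, norm_neg, Complex.norm_real,
      Real.norm_of_nonneg hu.le, Real.rpow_add_one hu.ne']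
    have : Real.exp (-(z.re * u)) ≤ Real.exp (-(r * u)) := by
      gcongr
      exact hre_ge z hz
    calc u ^ β.re * Real.exp (-(z.re * u)) * u = u ^ β.re * u * Real.exp (-(z.re * u)) := by ring
      _ ≤ u ^ β.re * u * Real.exp (-(r * u)) := by gcongr
  have hderiv : ∀ᵐ (u : ℝ) ∂(volume.restrict (Ioi 0)), ∀ z ∈ Metric.ball z₀ r,
      HasDerivAt (fun z : ℂ => (u : ℂ) ^ β * cexp (-(z * u)))
        ((u : ℂ) ^ β * (cexp (-(z * u)) * -(u : ℂ))) z := Eventually.of_forall fun u z _ => by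
    have : HasDerivAt (fun z : ℂ => -(z * u)) (-(u : ℂ)) z := by
      simpa using ((hasDerivAt_id z).mul_const (u : ℂ)).fun_neg
    exact this.cexp.const_mul _
  exact (hasDerivAt_integral_of_dominated_loc_of_deriv_le (Metric.ball_mem_nhds z₀ hr)
    (Eventually.of_forall hmeas) (integrableOn_cpow_mul_cexp_neg_Ioi_zero hβ hz₀) hmeas'
    hbound (integrableOn_rpow_mul_exp_neg_Ioi_zero (by linarith) hr) hderiv).2.differentiableAt

lemma laplaceTail_zero_ofReal (α : ℂ) (hα : 0 < α.re) {r : ℝ} (hr : 0 < r) :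
    laplaceTail (α - 1) r 0 = (r : ℂ) ^ (-α) * Complex.Gamma α := by
  have harg : (r : ℂ).arg ≠ Real.pi := by
    rw [Complex.arg_ofReal_of_nonneg hr.le]
    exact Real.pi_pos.ne
  rw [laplaceTail, Complex.integral_cpow_mul_exp_neg_mul_Ioi hα hr, one_div,
    Complex.inv_cpow _ _ harg, Complex.cpow_neg]

lemma laplaceTail_zero (α : ℂ) (hα : 0 < α.re) {lam : ℂ} (hlam : 0 < lam.re) :
    laplaceTail (α - 1) lam 0 = lam ^ (-α) * Complex.Gamma α := by
  have hU : IsOpen {z : ℂ | 0 < z.re} := isOpen_lt continuous_const Complex.continuous_re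
  have hG : AnalyticOnNhd ℂ (fun z => laplaceTail (α - 1) z 0) {z : ℂ | 0 < z.re} :=
    DifferentiableOn.analyticOnNhd (fun z hz => (differentiableAt_laplaceTail_zero
      (by simp [hα]) hz).differentiableWithinAt) hU
  have hH : AnalyticOnNhd ℂ (fun z : ℂ => z ^ (-α) * Complex.Gamma α) {z : ℂ | 0 < z.re} :=
    DifferentiableOn.analyticOnNhd (fun z hz => ((Complex.hasStrictDerivAt_cpow_const
      (Or.inl hz)).hasDerivAt.differentiableAt.mul_const _).differentiableWithinAt) hU
  have hreal : Tendsto (fun r : ℝ => (r : ℂ)) (𝓝[>] 1) (𝓝[≠] 1) :=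
    tendsto_nhdsWithin_of_tendsto_nhds_of_eventually_within _
      ((Complex.continuous_ofReal.tendsto' 1 1 Complex.ofReal_one).mono_left nhdsWithin_le_nhds)
      (eventually_nhdsWithin_of_forall fun r (hr : 1 < r) => by
        simpa [← Complex.ofReal_one] using hr.ne')
  have hfreq : ∃ᶠ z in 𝓝[≠] (1 : ℂ), laplaceTail (α - 1) z 0 = z ^ (-α) * Complex.Gamma α :=
    hreal.frequently (Eventually.frequently (eventually_nhdsWithin_of_forall
      fun r (hr : 1 < r) => laplaceTail_zero_ofReal α hα (one_pos.trans hr)))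
  exact hG.eqOn_of_preconnected_of_frequently_eq hH (convex_halfSpace_re_gt 0).isPreconnected
    (by simp) hfreq hlam

lemma norm_laplaceTail_le {β : ℂ} (hβ : β.re ≤ 0) {lam : ℂ} (hlam : 0 < lam.re) {t : ℝ}
    (ht : 0 < t) : ‖laplaceTail β lam t‖ ≤ t ^ β.re * (Real.exp (-lam.re * t) / lam.re) := by
  have hbound : ∀ᵐ (u : ℝ) ∂(volume.restrict (Ioi t)),
      ‖(u : ℂ) ^ β * cexp (-(lam * u))‖ ≤ t ^ β.re * Real.exp (-lam.re * u) := by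
    filter_upwards [ae_restrict_mem measurableSet_Ioi] with u (hu : t < u)
    rw [norm_cpow_mul_cexp_neg (ht.trans hu), neg_mul]
    exact mul_le_mul_of_nonneg_right (Real.rpow_le_rpow_of_nonpos ht hu.le hβ) (Real.exp_pos _).le
  refine (norm_integral_le_of_norm_le ((exp_neg_integrableOn_Ioi t hlam).const_mul _)
    hbound).trans_eq ?_
  rw [integral_const_mul, integral_exp_mul_Ioi (neg_neg_of_pos hlam), neg_div_neg_eq]

lemma isBigO_cexp_mul_laplaceTail {β : ℂ} (hβ : β.re ≤ 0) {lam : ℂ} (hlam : 0 < lam.re) :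
    (fun t : ℝ => cexp (lam * t) * laplaceTail β lam t) =O[atTop] fun t => t ^ β.re := by
  refine IsBigO.of_bound lam.re⁻¹ ?_
  filter_upwards [eventually_gt_atTop 0] with t ht
  rw [norm_mul, Complex.norm_exp, Real.norm_of_nonneg (Real.rpow_nonneg ht.le _)]
  calc Real.exp (lam * t).re * ‖laplaceTail β lam t‖
      ≤ Real.exp (lam.re * t) * (t ^ β.re * (Real.exp (-lam.re * t) / lam.re)) := by
        simpa using mul_le_mul_of_nonneg_left (norm_laplaceTail_le hβ hlam ht) (Real.exp_pos _).le
    _ = lam.re⁻¹ * t ^ β.re := by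
        rw [neg_mul, Real.exp_neg]
        field_simp

lemma isLittleO_rpow_rpow_add_one (c : ℝ) :
    (fun t : ℝ => t ^ c) =o[atTop] fun t => t ^ (c + 1) := by
  refine ((isBigO_refl (fun t : ℝ => t ^ (c + 1)) atTop).mul_isLittleO
    ((isLittleO_one_iff ℝ).2 tendsto_inv_atTop_zero)).congr' ?_ (by simp)
  filter_upwards [eventually_gt_atTop 0] with t ht
  rw [Real.rpow_add_one ht.ne']
  field_simp

lemma RL_cexp_eq_integral_Ioc (α lam : ℂ) {t : ℝ} (ht : 0 ≤ t) :
    RL α (fun x : ℝ => cexp (lam * x)) t = cexp (lam * t) * (Complex.Gamma α)⁻¹ *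
      ∫ u in Ioc 0 t, (u : ℂ) ^ (α - 1) * cexp (-(lam * u)) := by
  have hsub := intervalIntegral.integral_comp_sub_left
    (fun u : ℝ => cexp (lam * ↑(t - u)) * cpowR u (α - 1) / Complex.Gamma α) t (a := 0) (b := t)
  simp only [sub_sub_cancel, sub_self, sub_zero] at hsub
  rw [RL, hsub, intervalIntegral.integral_of_le ht, ← integral_const_mul]
  refine setIntegral_congr_fun measurableSet_Ioc fun u (hu : u ∈ Ioc 0 t) => ?_
  rw [cpowR_eq_cpow hu.1, Complex.ofReal_sub, mul_sub, sub_eq_add_neg, Complex.exp_add]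
  ring

lemma integral_Ioc_eq_laplaceTail_sub {β : ℂ} (hβ : -1 < β.re) {lam : ℂ} (hlam : 0 < lam.re)
    {t : ℝ} (ht : 0 ≤ t) :
    ∫ u in Ioc 0 t, (u : ℂ) ^ β * cexp (-(lam * u)) =
      laplaceTail β lam 0 - laplaceTail β lam t := by
  have hint := integrableOn_cpow_mul_cexp_neg_Ioi_zero hβ hlam
  rw [laplaceTail, laplaceTail, ← Ioc_union_Ioi_eq_Ioi ht, setIntegral_union
    (Ioc_disjoint_Ioi le_rfl) measurableSet_Ioi (hint.mono_set Ioc_subset_Ioi_self)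
    (hint.mono_set (Ioi_subset_Ioi ht)), add_sub_cancel_right]

lemma RL_cexp_sub_expansion_eq {α : ℂ} (hα : 0 < α.re) {lam : ℂ} (hlam : 0 < lam.re) (L : ℕ)
    {t : ℝ} (ht : 0 < t) :
    RL α (fun x : ℝ => cexp (lam * x)) t -
        (lam ^ (-α) * cexp (lam * t) - ∑ l ∈ Finset.Icc 1 L,
          (Complex.Gamma (α - l + 1))⁻¹ * (lam ^ l)⁻¹ * (t : ℂ) ^ (α - l)) =
      -((Complex.Gamma (α - L))⁻¹ * (lam ^ L)⁻¹) *
        (cexp (lam * t) * laplaceTail (α - 1 - L) lam t) := by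
  have hΓ : (Complex.Gamma α)⁻¹ * Complex.Gamma α = 1 :=
    inv_mul_cancel₀ (Complex.Gamma_ne_zero_of_re_pos hα)
  have hexp : cexp (lam * t) * cexp (-(lam * t)) = 1 := by rw [← Complex.exp_add]; simp
  have hexpand := inv_Gamma_mul_laplaceTail_eq hlam α ht L
  set S := ∑ l ∈ Finset.Icc 1 L, (Complex.Gamma (α - l + 1))⁻¹ * (lam ^ l)⁻¹ * (t : ℂ) ^ (α - l)
  rw [RL_cexp_eq_integral_Ioc α lam ht.le,
    integral_Ioc_eq_laplaceTail_sub (by simp [hα]) hlam ht.le, laplaceTail_zero α hα hlam]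
  linear_combination (cexp (lam * t) * lam ^ (-α)) * hΓ - cexp (lam * t) * hexpand - S * hexp

end RiemannLiouville

theorem stmt3 (α lam : ℂ) (hα : 0 < α.re) (hlam : 0 < lam.re)
    (L : ℕ) (hL : α.re - 1 < L) :
    (fun t : ℝ => RL α (fun x : ℝ => Complex.exp (lam * x)) t -
        (Complex.exp (-α * Complex.log lam) * Complex.exp (lam * t) -
          ∑ l ∈ Finset.Icc 1 L,
            (Complex.Gamma (α - l + 1))⁻¹ * (lam ^ l)⁻¹ * cpowR t (α - l)))
      =o[Filter.atTop] fun t : ℝ => t ^ (α.re - L) := by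
  have hβ : (α - 1 - L).re ≤ 0 := by
    simp only [Complex.sub_re, Complex.one_re, Complex.natCast_re]
    linarith
  have hexp : Complex.exp (-α * Complex.log lam) = lam ^ (-α) := by
    rw [Complex.cpow_def_of_ne_zero (fun h => by simp [h] at hlam), mul_comm]
  have hremainder := ((RiemannLiouville.isBigO_cexp_mul_laplaceTail hβ hlam).trans_isLittleO
    (RiemannLiouville.isLittleO_rpow_rpow_add_one _)).const_mul_left
      (-((Complex.Gamma (α - L))⁻¹ * (lam ^ L)⁻¹))
  refine hremainder.congr' ?_ (Eventually.of_forall fun t => ?_)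
  · filter_upwards [eventually_gt_atTop 0] with t ht
    simp only [hexp, RiemannLiouville.cpowR_eq_cpow ht]
    exact (RiemannLiouville.RL_cexp_sub_expansion_eq hα hlam L ht).symm
  · simp only [Complex.sub_re, Complex.one_re, Complex.natCast_re]
    ring_nf
end

section
/- Let (a_m) be a complex sequence that is both (T, θ, A)-scaled aML and (T', θ', A')-scaled aML with respect to the same (r, β), with A ≠ 0 and A' ≠ 0. Then T' = T, and there exists an integer k such that θ' = θ + 2πk/r and A' = exp(−2πi·k·β/r)·A. -/
/-- A complex sequence `a` is `(T, θ, A)`-scaled asymptotically Mittag-Leffler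
with respect to `(r, β)` if
`a m * Γ(1 + r·m + β) / (T^(r·m+β) · exp(i·θ·(r·m+β))) → A` as `m → ∞`. -/
def IsAML (r : ℕ) (β : ℂ) (a : ℕ → ℂ) (T θ : ℝ) (A : ℂ) : Prop :=
  Filter.Tendsto
    (fun m : ℕ => a m * Complex.Gamma (1 + (r : ℂ) * m + β) /
      (cpowR T ((r : ℂ) * m + β) * Complex.exp (Complex.I * (θ : ℂ) * ((r : ℂ) * m + β))))
    Filter.atTop (nhds A)

/-!
Both normalisations divide the same sequence `a m * Γ(1 + r m + β)` by `exp (w_m * s)`, with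
`w_m = r m + β` and `s = log T + iθ`. Hence the ratio of the two normalised sequences is
`exp (w_m * (s - s'))`, which converges to `A' / A ≠ 0`. Since it is a geometric sequence of ratio
`exp (r (s - s'))`, that ratio must be `1`, i.e. `r (s - s') ∈ 2πiℤ`: the real part gives `T = T'`,
the imaginary part `θ' = θ + 2πk/r`, and the constant value `exp (β (s - s'))` of the sequence is
`A' / A`.
-/

open Filter Topology

theorem eq_one_of_tendsto_of_succ_eq_mul {M : Type*} [MonoidWithZero M] [IsRightCancelMulZero M]
    [TopologicalSpace M] [ContinuousMul M] [T2Space M] {u : ℕ → M} {q L : M}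
    (hu : ∀ m, u (m + 1) = q * u m)
    (hlim : Tendsto u atTop (𝓝 L)) (hL : L ≠ 0) : q = 1 := by
  have hqL : q * L = L := by
    refine tendsto_nhds_unique (hlim.const_mul q) ?_
    simpa only [Function.comp_def, hu] using hlim.comp (tendsto_add_atTop_nat 1)
  exact mul_right_cancel₀ hL (hqL.trans (one_mul L).symm)

theorem Complex.exp_eq_one_and_exp_eq_of_tendsto {ρ β z L : ℂ}
    (hlim : Tendsto (fun m : ℕ => exp ((ρ * m + β) * z)) atTop (𝓝 L)) (hL : L ≠ 0) :
    exp (ρ * z) = 1 ∧ exp (β * z) = L := by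
  have hρ : exp (ρ * z) = 1 := by
    refine eq_one_of_tendsto_of_succ_eq_mul (fun m => ?_) hlim hL
    rw [← exp_add]
    push_cast
    ring_nf
  have hconst : ∀ m : ℕ, exp ((ρ * m + β) * z) = exp (β * z) := fun m => by
    rw [add_mul, exp_add, mul_right_comm, mul_comm _ (m : ℂ), exp_nat_mul, hρ, one_pow, one_mul]
  refine ⟨hρ, tendsto_nhds_unique ?_ hlim⟩
  simp only [hconst, tendsto_const_nhds]

theorem cpowR_mul_exp_I_mul (U φ : ℝ) (w : ℂ) :
    cpowR U w * Complex.exp (Complex.I * φ * w) =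
      Complex.exp (w * (Real.log U + Complex.I * φ)) := by
  rw [cpowR, ← Complex.exp_add]
  ring_nf

theorem IsAML.tendsto_exp_div {r : ℕ} {β : ℂ} {a : ℕ → ℂ} {T T' θ θ' : ℝ} {A A' : ℂ}
    (haML : IsAML r β a T θ A) (haML' : IsAML r β a T' θ' A') (hA : A ≠ 0) :
    Tendsto (fun m : ℕ => Complex.exp ((r * m + β) *
        ((Real.log T + Complex.I * θ) - (Real.log T' + Complex.I * θ'))))
      atTop (𝓝 (A' / A)) := by
  refine (haML'.div haML hA).congr' ?_
  filter_upwards [haML.eventually_ne hA] with m hm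
  have hN : a m * Complex.Gamma (1 + r * m + β) ≠ 0 := fun h => hm (by simp [h])
  simp only [Pi.div_apply, cpowR_mul_exp_I_mul, mul_sub, Complex.exp_sub]
  field_simp
  exact div_self hN

theorem stmt11_general (r : ℕ) (hr : 1 ≤ r) (β : ℂ)
    (T T' : ℝ) (hT : 0 < T) (hT' : 0 < T') (θ θ' : ℝ) (A A' : ℂ) (a : ℕ → ℂ)
    (haML : IsAML r β a T θ A) (haML' : IsAML r β a T' θ' A')
    (hA : A ≠ 0) (hA' : A' ≠ 0) :
    T' = T ∧ ∃ k : ℤ, θ' = θ + 2 * Real.pi * k / r ∧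
      A' = Complex.exp (-(2 * Real.pi * Complex.I * k * β / r)) * A := by
  obtain ⟨hrz, hβz⟩ := Complex.exp_eq_one_and_exp_eq_of_tendsto
    (haML.tendsto_exp_div haML' hA) (div_ne_zero hA' hA)
  generalize hz : (Real.log T + Complex.I * θ) - (Real.log T' + Complex.I * θ') = z at hrz hβz
  obtain ⟨n, hn⟩ := Complex.exp_eq_one_iff.mp hrz
  have hr0 : (r : ℂ) ≠ 0 := Nat.cast_ne_zero.mpr (by omega)
  have hz' : z = n * (2 * Real.pi * Complex.I) / r := by
    field_simp
    linear_combination hn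
  have hlog : Real.log T = Real.log T' := by
    simpa [sub_eq_zero] using congrArg Complex.re (hz.trans hz')
  have hθ : θ - θ' = n * (2 * Real.pi) / r := by
    simpa using congrArg Complex.im (hz.trans hz')
  refine ⟨Real.log_injOn_pos hT' hT hlog.symm, -n, ?_, ?_⟩
  · push_cast
    linear_combination -hθ
  · rw [eq_div_iff hA] at hβz
    rw [← hβz, hz']
    push_cast
    ring_nf

theorem stmt11 (r : ℕ) (hr : 1 ≤ r) (β : ℂ) (hβ : -1 < β.re)
    (T T' : ℝ) (hT : 0 < T) (hT' : 0 < T') (θ θ' : ℝ) (A A' : ℂ) (a : ℕ → ℂ)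
    (haML : IsAML r β a T θ A) (haML' : IsAML r β a T' θ' A')
    (hA : A ≠ 0) (hA' : A' ≠ 0) :
    T' = T ∧ ∃ k : ℤ, θ' = θ + 2 * Real.pi * k / r ∧
      A' = Complex.exp (-(2 * Real.pi * Complex.I * k * β / r)) * A :=
  stmt11_general r hr β T T' hT hT' θ θ' A A' a haML haML' hA hA'
end

section
/- Let (a_m) be a complex sequence that is (T, θ, A)-scaled aML with respect to (r, β), with A ≠ 0. Then for every T' > 0, θ' ∈ ℝ and A' ∈ ℂ with A' ≠ 0, the sequence (a_m) is NOT (T', θ', A')-scaled aML with respect to (r, β + 1). (This expresses that multiplying the series ∑_m a_m t^(rm+β) by t destroys the asymptotically Mittag-Leffler property for every nontrivial scaling.) -/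
open Filter Topology Asymptotics

lemma not_tendsto_mul_pow_nhds {g : ℕ → ℝ} (hg : Tendsto g atTop atTop)
    (hgO : g =O[atTop] fun m => (m : ℝ)) {q : ℝ} (hq : 0 < q) {L : ℝ} (hL : L ≠ 0) :
    ¬ Tendsto (fun m => g m * q ^ m) atTop (𝓝 L) := by
  intro hL'
  rcases lt_or_ge q 1 with hq1 | hq1
  · have h0 : Tendsto (fun m => g m * q ^ m) atTop (𝓝 0) :=
      (hgO.mul (isBigO_refl (fun m => q ^ m) atTop)).trans_tendsto
        (tendsto_self_mul_const_pow_of_lt_one hq.le hq1)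
    exact hL (tendsto_nhds_unique hL' h0)
  · refine not_tendsto_nhds_of_tendsto_atTop (tendsto_atTop_mono' atTop ?_ hg) L hL'
    filter_upwards [hg.eventually_ge_atTop 0] with m hm
    exact le_mul_of_one_le_right hm (one_le_pow₀ hq1)

section ArithmeticProgression

variable {r : ℕ} (c : ℂ)

lemma tendsto_norm_natCast_mul_add_atTop (hr : 0 < r) :
    Tendsto (fun m : ℕ => ‖(r : ℂ) * m + c‖) atTop atTop := by
  have h : Tendsto (fun m : ℕ => (r : ℝ) * m + c.re) atTop atTop :=
    tendsto_atTop_add_const_right _ _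
      (tendsto_natCast_atTop_atTop.const_mul_atTop (Nat.cast_pos.mpr hr))
  refine tendsto_atTop_mono (fun m => ?_) h
  simpa using Complex.re_le_norm ((r : ℂ) * m + c)

lemma isBigO_norm_natCast_mul_add :
    (fun m : ℕ => ‖(r : ℂ) * m + c‖) =O[atTop] fun m => (m : ℝ) := by
  refine IsBigO.of_bound (r + ‖c‖) ?_
  filter_upwards [eventually_ge_atTop 1] with m hm
  have hm' : (1 : ℝ) ≤ m := Nat.one_le_cast.mpr hm
  calc ‖‖(r : ℂ) * m + c‖‖ ≤ r * m + ‖c‖ := by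
        simpa using norm_add_le ((r : ℂ) * m) c
    _ ≤ (r + ‖c‖) * ‖(m : ℝ)‖ := by
        rw [Real.norm_natCast]; nlinarith [norm_nonneg c]

end ArithmeticProgression

noncomputable def amlScale (T θ : ℝ) (w : ℂ) : ℂ := cpowR T w * Complex.exp (Complex.I * θ * w)

lemma amlScale_ne_zero (T θ : ℝ) (w : ℂ) : amlScale T θ w ≠ 0 :=
  mul_ne_zero (Complex.exp_ne_zero _) (Complex.exp_ne_zero _)

lemma norm_amlScale (T θ : ℝ) (w : ℂ) :
    ‖amlScale T θ w‖ = Real.exp (w.re * Real.log T - θ * w.im) := by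
  rw [amlScale, cpowR, norm_mul, Complex.norm_exp, Complex.norm_exp, ← Real.exp_add]
  simp [Complex.mul_re, Complex.mul_im]
  ring

lemma exists_norm_amlScale_div_eq_mul_pow (r : ℕ) (β : ℂ) (T θ T' θ' : ℝ) :
    ∃ C q : ℝ, 0 < C ∧ 0 < q ∧ ∀ m : ℕ,
      ‖amlScale T θ ((r : ℂ) * m + β) / amlScale T' θ' ((r : ℂ) * m + (β + 1))‖ = C * q ^ m := by
  refine ⟨Real.exp (β.re * Real.log T - θ * β.im - ((β.re + 1) * Real.log T' - θ' * β.im)),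
    Real.exp (r * (Real.log T - Real.log T')), Real.exp_pos _, Real.exp_pos _, fun m => ?_⟩
  rw [norm_div, norm_amlScale, norm_amlScale, ← Real.exp_sub, ← Real.exp_nat_mul,
    ← Real.exp_add]
  congr 1
  simp
  ring

noncomputable def amlSeq (r : ℕ) (β : ℂ) (a : ℕ → ℂ) (T θ : ℝ) (m : ℕ) : ℂ :=
  a m * Complex.Gamma (1 + (r : ℂ) * m + β) / amlScale T θ ((r : ℂ) * m + β)

lemma isAML_iff {r : ℕ} {β : ℂ} {a : ℕ → ℂ} {T θ : ℝ} {A : ℂ} :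
    IsAML r β a T θ A ↔ Tendsto (amlSeq r β a T θ) atTop (𝓝 A) := Iff.rfl

lemma amlSeq_add_one (r : ℕ) (β : ℂ) (a : ℕ → ℂ) (T θ T' θ' : ℝ) {m : ℕ}
    (hm : 1 + (r : ℂ) * m + β ≠ 0) :
    amlSeq r (β + 1) a T' θ' m = amlSeq r β a T θ m * ((1 + (r : ℂ) * m + β) *
      (amlScale T θ ((r : ℂ) * m + β) / amlScale T' θ' ((r : ℂ) * m + (β + 1)))) := by
  have hΓ : Complex.Gamma (1 + (r : ℂ) * m + (β + 1))
      = (1 + (r : ℂ) * m + β) * Complex.Gamma (1 + (r : ℂ) * m + β) := by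
    rw [← Complex.Gamma_add_one _ hm]; ring_nf
  have := amlScale_ne_zero T θ ((r : ℂ) * m + β)
  have := amlScale_ne_zero T' θ' ((r : ℂ) * m + (β + 1))
  rw [amlSeq, amlSeq, hΓ]
  field_simp

theorem stmt14_general (r : ℕ) (hr : 1 ≤ r) (β : ℂ)
    (T : ℝ) (θ : ℝ) (A : ℂ) (a : ℕ → ℂ)
    (haML : IsAML r β a T θ A) (hA : A ≠ 0) :
    ∀ T' : ℝ, 0 < T' → ∀ θ' : ℝ, ∀ A' : ℂ, A' ≠ 0 →
      ¬ IsAML r (β + 1) a T' θ' A' := by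
  intro T' _ θ' A' hA' haML'
  rw [isAML_iff] at haML haML'
  obtain ⟨C, q, hC, hq, hnorm⟩ := exists_norm_amlScale_div_eq_mul_pow r β T θ T' θ'
  have hprog := tendsto_norm_natCast_mul_add_atTop (1 + β) hr
  have hshift : ∀ᶠ m in atTop, amlSeq r (β + 1) a T' θ' m / amlSeq r β a T θ m
      = (1 + (r : ℂ) * m + β) *
        (amlScale T θ ((r : ℂ) * m + β) / amlScale T' θ' ((r : ℂ) * m + (β + 1))) := by
    filter_upwards [haML.eventually_ne hA, hprog.eventually_gt_atTop 0] with m hu hpos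
    have hm : 1 + (r : ℂ) * m + β ≠ 0 := by
      rw [show 1 + (r : ℂ) * m + β = r * m + (1 + β) by ring]; exact norm_pos_iff.mp hpos
    rw [amlSeq_add_one r β a T θ T' θ' hm, mul_div_cancel_left₀ _ hu]
  have hratio := ((haML'.div haML hA).congr' hshift).norm.div_const C
  refine not_tendsto_mul_pow_nhds hprog (isBigO_norm_natCast_mul_add (1 + β)) hq
    (div_ne_zero (norm_ne_zero_iff.mpr (div_ne_zero hA' hA)) hC.ne') (hratio.congr fun m => ?_)
  rw [norm_mul, hnorm, show (r : ℂ) * m + (1 + β) = 1 + r * m + β by ring]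
  field_simp

theorem stmt14 (r : ℕ) (hr : 1 ≤ r) (β : ℂ) (hβ : -1 < β.re)
    (T : ℝ) (hT : 0 < T) (θ : ℝ) (A : ℂ) (a : ℕ → ℂ)
    (haML : IsAML r β a T θ A) (hA : A ≠ 0) :
    ∀ T' : ℝ, 0 < T' → ∀ θ' : ℝ, ∀ A' : ℂ, A' ≠ 0 →
      ¬ IsAML r (β + 1) a T' θ' A' :=
  stmt14_general r hr β T θ A a haML hA
end

section
/- Let r_X, r_Y ≥ 1 be integers and r := gcd(r_X, r_Y). Then for all s_X, s_Y ∈ ℂ and every m ∈ ℕ, ∑ s_X^{r_X·m_X}·s_Y^{r_Y·m_Y}/((r_X·m_X)!·(r_Y·m_Y)!) = (1/(r_X·r_Y))·∑_{k=0}^{r_X−1} ∑_{ℓ=0}^{r_Y−1} (exp(2πik/r_X)·s_X + exp(2πiℓ/r_Y)·s_Y)^{r·m}/(r·m)!, where the left-hand sum ranges over all pairs (m_X, m_Y) ∈ ℕ² with r_X·m_X + r_Y·m_Y = r·m. -/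
/-!
Expand each power `(ζ^k x + ξ^l y)^N / N!` by the binomial theorem. Averaging over the
`r`-th roots of unity annihilates `(ζ^k)^i` unless `r ∣ i`, so the double average keeps exactly
the terms `x^i y^j / (i! j!)` with `i + j = N`, `r_X ∣ i` and `r_Y ∣ j`, i.e. `i = r_X m_X`,
`j = r_Y m_Y`.
-/

open Finset Nat

theorem IsPrimitiveRoot.sum_pow_pow_eq_ite {R : Type*} [CommRing R] [IsDomain R] {ζ : R} {r : ℕ}
    (hζ : IsPrimitiveRoot ζ r) (j : ℕ) :
    ∑ k ∈ range r, (ζ ^ k) ^ j = if r ∣ j then (r : R) else 0 := by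
  simp_rw [← pow_mul, mul_comm _ j, pow_mul]
  split_ifs with hrj
  · simp [(hζ.pow_eq_one_iff_dvd j).mpr hrj]
  · have hne : ζ ^ j - 1 ≠ 0 := sub_ne_zero.mpr fun h => hrj ((hζ.pow_eq_one_iff_dvd j).mp h)
    have hpow : (ζ ^ j) ^ r = 1 := by rw [← pow_mul, mul_comm, pow_mul, hζ.pow_eq_one, one_pow]
    have hgeom := geom_sum_mul (ζ ^ j) r
    rw [hpow, sub_self] at hgeom
    exact (mul_eq_zero.mp hgeom).resolve_right hne

theorem add_pow_div_factorial {K : Type*} [Field K] [CharZero K] (x y : K) (n : ℕ) :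
    (x + y) ^ n / n ! = ∑ p ∈ antidiagonal n, x ^ p.1 / p.1 ! * (y ^ p.2 / p.2 !) := by
  rw [(Commute.all x y).add_pow', sum_div]
  refine sum_congr rfl fun p hp => ?_
  rw [← mem_antidiagonal.mp hp, nsmul_eq_mul, Nat.cast_choose K (le_add_right _ _),
    add_tsub_cancel_left]
  have := (p.1 + p.2).factorial_ne_zero
  field_simp

theorem IsPrimitiveRoot.sum_sum_mul_add_mul_pow_div_factorial {K : Type*} [Field K] [CharZero K]
    {ζ ξ : K} {r s : ℕ} (hζ : IsPrimitiveRoot ζ r) (hξ : IsPrimitiveRoot ξ s) (x y : K) (n : ℕ) :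
    ∑ k ∈ range r, ∑ l ∈ range s, (ζ ^ k * x + ξ ^ l * y) ^ n / n ! =
      r * s * ∑ p ∈ (antidiagonal n).filter (fun p => r ∣ p.1 ∧ s ∣ p.2),
        x ^ p.1 / p.1 ! * (y ^ p.2 / p.2 !) := by
  have hterm : ∀ k l, (ζ ^ k * x + ξ ^ l * y) ^ n / n ! = ∑ p ∈ antidiagonal n,
      (ζ ^ k) ^ p.1 * (ξ ^ l) ^ p.2 * (x ^ p.1 / p.1 ! * (y ^ p.2 / p.2 !)) := by
    intro k l
    rw [add_pow_div_factorial]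
    refine sum_congr rfl fun p _ => ?_
    ring
  calc _ = (∑ p ∈ antidiagonal n, (∑ k ∈ range r, (ζ ^ k) ^ p.1) *
          (∑ l ∈ range s, (ξ ^ l) ^ p.2) * (x ^ p.1 / p.1 ! * (y ^ p.2 / p.2 !)) : K) := by
        simp_rw [hterm, sum_mul_sum, sum_mul]
        exact (sum_congr rfl fun k _ => sum_comm).trans sum_comm
    _ = _ := by
        simp_rw [hζ.sum_pow_pow_eq_ite, hξ.sum_pow_pow_eq_ite]
        rw [sum_filter, mul_sum]
        refine sum_congr rfl fun p _ => ?_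
        split_ifs <;> simp_all

theorem sum_filter_mul_add_mul_eq_sum_filter_antidiagonal {M : Type*} [AddCommMonoid M]
    {r s : ℕ} (hr : 0 < r) (hs : 0 < s) (n : ℕ) (f : ℕ → ℕ → M) :
    ∑ p ∈ (range (n + 1) ×ˢ range (n + 1)).filter (fun p => r * p.1 + s * p.2 = n),
        f (r * p.1) (s * p.2) =
      ∑ p ∈ (antidiagonal n).filter (fun p => r ∣ p.1 ∧ s ∣ p.2), f p.1 p.2 := by
  refine sum_nbij' (fun p => (r * p.1, s * p.2)) (fun p => (p.1 / r, p.2 / s)) ?_ ?_ ?_ ?_ ?_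
  · rintro ⟨a, b⟩ h
    simp only [mem_filter, mem_product, mem_range, HasAntidiagonal.mem_antidiagonal] at h ⊢
    exact ⟨h.2, dvd_mul_right r a, dvd_mul_right s b⟩
  · rintro ⟨i, j⟩ h
    simp only [mem_filter, mem_product, mem_range, HasAntidiagonal.mem_antidiagonal] at h ⊢
    obtain ⟨hij, ⟨a, rfl⟩, ⟨b, rfl⟩⟩ := h
    simp only [Nat.mul_div_cancel_left _ hr, Nat.mul_div_cancel_left _ hs]
    refine ⟨⟨?_, ?_⟩, hij⟩ <;> nlinarith
  · rintro ⟨a, b⟩ -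
    simp [Nat.mul_div_cancel_left _ hr, Nat.mul_div_cancel_left _ hs]
  · rintro ⟨i, j⟩ h
    simp only [mem_filter, HasAntidiagonal.mem_antidiagonal] at h
    simp [Nat.mul_div_cancel' h.2.1, Nat.mul_div_cancel' h.2.2]
  · exact fun _ _ => rfl

theorem Complex.exp_two_pi_mul_I_mul_div_eq_pow (k n : ℕ) :
    Complex.exp (2 * Real.pi * Complex.I * k / n) =
      Complex.exp (2 * Real.pi * Complex.I / n) ^ k := by
  rw [← Complex.exp_nat_mul]
  ring_nf

theorem stmt18 (rX rY : ℕ) (hrX : 1 ≤ rX) (hrY : 1 ≤ rY) (sX sY : ℂ) (m : ℕ) :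
    ∑ p ∈ (Finset.range (Nat.gcd rX rY * m + 1) ×ˢ
        Finset.range (Nat.gcd rX rY * m + 1)).filter
        (fun p : ℕ × ℕ => rX * p.1 + rY * p.2 = Nat.gcd rX rY * m),
      sX ^ (rX * p.1) * sY ^ (rY * p.2) /
        (((rX * p.1).factorial : ℂ) * ((rY * p.2).factorial : ℂ))
    = (1 / ((rX : ℂ) * (rY : ℂ))) *
        ∑ k ∈ Finset.range rX, ∑ l ∈ Finset.range rY,
          (Complex.exp (2 * Real.pi * Complex.I * k / rX) * sX +
              Complex.exp (2 * Real.pi * Complex.I * l / rY) * sY) ^ (Nat.gcd rX rY * m) /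
            ((Nat.gcd rX rY * m).factorial : ℂ) := by
  have hr : ((rX : ℂ) * rY) ≠ 0 :=
    mul_ne_zero (Nat.cast_ne_zero.mpr (by omega)) (Nat.cast_ne_zero.mpr (by omega))
  simp_rw [Complex.exp_two_pi_mul_I_mul_div_eq_pow]
  rw [(Complex.isPrimitiveRoot_exp rX (by omega)).sum_sum_mul_add_mul_pow_div_factorial
      (Complex.isPrimitiveRoot_exp rY (by omega)),
    ← mul_assoc, one_div_mul_cancel hr, one_mul,
    ← sum_filter_mul_add_mul_eq_sum_filter_antidiagonal hrX hrY _
      fun i j => sX ^ i / i ! * (sY ^ j / j !)]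
  exact sum_congr rfl fun p _ => (div_mul_div_comm _ _ _ _).symm
end

section
/- Let r_X, r_Y ≥ 1 be integers, let k, ℓ be integers with 0 ≤ k < r_X and 0 ≤ ℓ < r_Y such that exp(2πik/r_X) ≠ exp(2πiℓ/r_Y), and let S_X, S_Y > 0 be real numbers with S_X + S_Y = 1. Then for all (a, b) ∈ [0, S_X] × [0, S_Y], |exp(2πik/r_X)·a + exp(2πiℓ/r_Y)·b| ≤ max(S_X, S_Y, |exp(2πik/r_X)·S_X + exp(2πiℓ/r_Y)·S_Y|), and this maximum is strictly less than 1. -/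
/-!
The map `(a, b) ↦ ‖a • u + b • v‖` is convex in each variable separately, so on the box
`[0, S_X] × [0, S_Y]` it is bounded by its values at the corners: `0`, `S_X`, `S_Y` and
`‖S_X • u + S_Y • v‖`. Since `ℂ` is strictly convex, the convex combination `S_X • u + S_Y • v`
of two distinct unit vectors has norm `< 1`.
-/

open Set

theorem norm_add_smul_le_max {E : Type*} [SeminormedAddCommGroup E] [NormedSpace ℝ E]
    (x y : E) {a A : ℝ} (ha : a ∈ Icc 0 A) : ‖x + a • y‖ ≤ max ‖x‖ ‖x + A • y‖ := by
  have hconv := (convexOn_norm (convex_univ : Convex ℝ (univ : Set E))).comp_affineMap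
    (AffineMap.lineMap x (x + y))
  simpa [AffineMap.lineMap_apply, add_comm] using
    hconv.le_max_of_mem_Icc (mem_univ 0) (mem_univ A) ha

theorem norm_smul_add_smul_le_max {E : Type*} [SeminormedAddCommGroup E] [NormedSpace ℝ E]
    (x y : E) {a b A B : ℝ} (ha : a ∈ Icc 0 A) (hb : b ∈ Icc 0 B) :
    ‖a • x + b • y‖ ≤ max (max ‖A • x‖ ‖B • y‖) ‖A • x + B • y‖ := by
  have hb_le : ‖b • y‖ ≤ ‖B • y‖ := by
    rw [norm_smul, norm_smul, Real.norm_of_nonneg hb.1, Real.norm_of_nonneg (hb.1.trans hb.2)]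
    exact mul_le_mul_of_nonneg_right hb.2 (norm_nonneg y)
  calc ‖a • x + b • y‖ = ‖b • y + a • x‖ := by rw [add_comm]
    _ ≤ max ‖b • y‖ ‖b • y + A • x‖ := norm_add_smul_le_max _ _ ha
    _ = max ‖b • y‖ ‖A • x + b • y‖ := by rw [add_comm (b • y)]
    _ ≤ max ‖B • y‖ (max ‖A • x‖ ‖A • x + B • y‖) :=
      max_le_max hb_le (norm_add_smul_le_max _ _ hb)
    _ = max (max ‖A • x‖ ‖B • y‖) ‖A • x + B • y‖ := by
      rw [max_left_comm, ← max_assoc]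

theorem stmt19_general (rX rY : ℕ)
    (k l : ℕ)
    (hne : Complex.exp (2 * Real.pi * Complex.I * k / rX) ≠
      Complex.exp (2 * Real.pi * Complex.I * l / rY))
    (SX SY : ℝ) (hSX : 0 < SX) (hSY : 0 < SY) (hsum : SX + SY = 1) :
    (∀ a b : ℝ, a ∈ Set.Icc (0 : ℝ) SX → b ∈ Set.Icc (0 : ℝ) SY →
      norm (Complex.exp (2 * Real.pi * Complex.I * k / rX) * a +
          Complex.exp (2 * Real.pi * Complex.I * l / rY) * b) ≤
        max (max SX SY)
          (norm (Complex.exp (2 * Real.pi * Complex.I * k / rX) * SX +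
            Complex.exp (2 * Real.pi * Complex.I * l / rY) * SY))) ∧
    max (max SX SY)
      (norm (Complex.exp (2 * Real.pi * Complex.I * k / rX) * SX +
        Complex.exp (2 * Real.pi * Complex.I * l / rY) * SY)) < 1 := by
  set u := Complex.exp (2 * Real.pi * Complex.I * k / rX)
  set v := Complex.exp (2 * Real.pi * Complex.I * l / rY)
  have hu : ‖u‖ = 1 := by simp [u, Complex.norm_exp]
  have hv : ‖v‖ = 1 := by simp [v, Complex.norm_exp]
  have hmul_eq_smul (z : ℂ) (t : ℝ) : z * t = t • z := by rw [Complex.real_smul, mul_comm]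
  simp only [hmul_eq_smul]
  refine ⟨fun a b ha hb => ?_, max_lt (max_lt (by linarith) (by linarith)) ?_⟩
  · simpa [norm_smul, hu, hv, abs_of_pos hSX, abs_of_pos hSY] using
      norm_smul_add_smul_le_max u v ha hb
  · exact norm_combo_lt_of_ne hu.le hv.le hne hSX hSY hsum

theorem stmt19 (rX rY : ℕ) (hrX : 1 ≤ rX) (hrY : 1 ≤ rY)
    (k l : ℕ) (hk : k < rX) (hl : l < rY)
    (hne : Complex.exp (2 * Real.pi * Complex.I * k / rX) ≠
      Complex.exp (2 * Real.pi * Complex.I * l / rY))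
    (SX SY : ℝ) (hSX : 0 < SX) (hSY : 0 < SY) (hsum : SX + SY = 1) :
    (∀ a b : ℝ, a ∈ Set.Icc (0 : ℝ) SX → b ∈ Set.Icc (0 : ℝ) SY →
      norm (Complex.exp (2 * Real.pi * Complex.I * k / rX) * a +
          Complex.exp (2 * Real.pi * Complex.I * l / rY) * b) ≤
        max (max SX SY)
          (norm (Complex.exp (2 * Real.pi * Complex.I * k / rX) * SX +
            Complex.exp (2 * Real.pi * Complex.I * l / rY) * SY))) ∧
    max (max SX SY)
      (norm (Complex.exp (2 * Real.pi * Complex.I * k / rX) * SX +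
        Complex.exp (2 * Real.pi * Complex.I * l / rY) * SY)) < 1 :=
  stmt19_general rX rY k l hne SX SY hSX hSY hsum
end
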